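/- arXiv:1702.00679 — 4 statements merged into one kernel-verified Lean document; each statement's English description precedes it below -/
import Mathlib

section
/- Let V be a valuation ring and a a nonzero element of its maximal ideal such that ⋂_{n≥0} aⁿV = 0 (V is a-adically separated). Then every nonzero prime ideal of V contains a; consequently, the localization V[1/a] of V away from a is a field, canonically isomorphic to the fraction field of V. -/
/-! Separatedness says no nonzero element is divisible by every power of `a`; since divisibility
in a valuation ring is total, every nonzero element therefore divides some power of `a`. Hence a
nonzero prime contains a power of `a`, so `a` itself, and inverting `a` already inverts every
nonzero element. -/

namespace ValuationRing

variable {R : Type*} [CommRing R] [PreValuationRing R] {a : R}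

theorem exists_dvd_pow_of_iInf_span_pow_eq_bot (hsep : ⨅ k : ℕ, Ideal.span {a ^ k} = ⊥)
    {x : R} (hx : x ≠ 0) : ∃ k : ℕ, x ∣ a ^ k := by
  by_contra! h
  refine hx (Ideal.mem_bot.1 (hsep ▸ Ideal.mem_iInf.2 fun k ↦ ?_))
  exact Ideal.mem_span_singleton.2 ((dvd_total x (a ^ k)).resolve_left (h k))

theorem mem_of_isPrime_of_iInf_span_pow_eq_bot (hsep : ⨅ k : ℕ, Ideal.span {a ^ k} = ⊥)
    {p : Ideal R} (hp : p.IsPrime) (hp0 : p ≠ ⊥) : a ∈ p := by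
  obtain ⟨x, hxp, hx⟩ := Submodule.exists_mem_ne_zero_of_ne_bot hp0
  obtain ⟨k, hk⟩ := exists_dvd_pow_of_iInf_span_pow_eq_bot hsep hx
  exact hp.mem_of_pow_mem k (Ideal.mem_of_dvd p hk hxp)

theorem isFractionRing_of_isLocalization_away [IsDomain R] (ha : a ≠ 0)
    (hsep : ⨅ k : ℕ, Ideal.span {a ^ k} = ⊥) (S : Type*) [CommRing S] [Algebra R S]
    [IsLocalization.Away a S] : IsFractionRing R S := by
  refine IsLocalization.of_le_of_exists_dvd (Submonoid.powers a) _ ?_ fun x hx ↦ ?_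
  · rintro _ ⟨n, rfl⟩
    exact mem_nonZeroDivisors_of_ne_zero (pow_ne_zero n ha)
  · obtain ⟨k, hk⟩ := exists_dvd_pow_of_iInf_span_pow_eq_bot hsep (nonZeroDivisors.ne_zero hx)
    exact ⟨a ^ k, ⟨k, rfl⟩, hk⟩

end ValuationRing

theorem localization_away_of_separated_valuation_ring_is_fraction_field_general
    (V : Type) [CommRing V] [IsDomain V] [ValuationRing V]
    (a : V) (ha : a ≠ 0)
    (hsep : (⨅ k : ℕ, (Ideal.span {a ^ k} : Ideal V)) = ⊥) :
    (∀ p : Ideal V, p.IsPrime → p ≠ ⊥ → a ∈ p) ∧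
    IsField (Localization.Away a) ∧
    IsFractionRing V (Localization.Away a) ∧
    Nonempty (Localization.Away a ≃+* FractionRing V) := by
  have hfrac := ValuationRing.isFractionRing_of_isLocalization_away ha hsep (Localization.Away a)
  exact ⟨fun _ ↦ ValuationRing.mem_of_isPrime_of_iInf_span_pow_eq_bot hsep,
    (IsFractionRing.toField V).toIsField, hfrac,
    ⟨(IsLocalization.algEquiv (nonZeroDivisors V) _ (FractionRing V)).toRingEquiv⟩⟩

/-- Let `V` be a valuation ring and `a` a nonzero element of its maximal ideal such that
`⋂ₙ aⁿV = 0`.  Then every nonzero prime ideal of `V` contains `a`; consequently the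
localization `V[1/a]` is a field, canonically isomorphic to the fraction field of `V`. -/
theorem localization_away_of_separated_valuation_ring_is_fraction_field
    (V : Type) [CommRing V] [IsDomain V] [ValuationRing V]
    (a : V) (ha : a ≠ 0) (hma : a ∈ IsLocalRing.maximalIdeal V)
    (hsep : (⨅ k : ℕ, (Ideal.span {a ^ k} : Ideal V)) = ⊥) :
    (∀ p : Ideal V, p.IsPrime → p ≠ ⊥ → a ∈ p) ∧
    IsField (Localization.Away a) ∧
    IsFractionRing V (Localization.Away a) ∧
    Nonempty (Localization.Away a ≃+* FractionRing V) :=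
  localization_away_of_separated_valuation_ring_is_fraction_field_general V a ha hsep
end

section
/- Let (R_i)_{i∈I} be a directed system of commutative rings over a directed index set, with all transition ring homomorphisms flat, and let R be the direct limit (filtered colimit) of this system. Let S be a commutative R-algebra such that, for every index i, S is flat as an R_i-module via the composite R_i → R → S. Then S is flat as an R-module. -/
/-!
Use the equational criterion for flatness. Given a relation `∑ cₙ xₙ = 0` in `S` with coefficients
in the limit `L`, lift the finitely many coefficients to a single `R i` by directedness. The
relation then holds over `R i`, where flatness of `S` makes it trivial, and the trivialization
maps back to one over `L`.
-/

namespace Module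

variable {A L M : Type*} [CommRing A] [CommRing L] [Algebra A L]
  [AddCommGroup M] [Module L M] [Module A M] [IsScalarTower A L M]
  {ι : Type*} [Fintype ι]

theorem IsTrivialRelation.algebraMap_comp {f : ι → A} {x : ι → M}
    (h : IsTrivialRelation f x) : IsTrivialRelation (algebraMap A L ∘ f) x := by
  obtain ⟨k, a, y, hxy, hfa⟩ := h
  refine ⟨k, fun i j => algebraMap A L (a i j), y, fun i => ?_, fun j => ?_⟩
  · simp only [algebraMap_smul, hxy i]
  · simp only [Function.comp_apply, ← map_mul, ← map_sum, hfa j, map_zero]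

theorem Flat.isTrivialRelation_of_mem_range [Flat A M] {f : ι → L} {x : ι → M}
    (hf : ∀ i, f i ∈ (algebraMap A L).range) (h : ∑ i, f i • x i = 0) :
    IsTrivialRelation f x := by
  choose f' hf' using hf
  obtain rfl : algebraMap A L ∘ f' = f := funext hf'
  refine IsTrivialRelation.algebraMap_comp (isTrivialRelation_of_sum_smul_eq_zero ?_)
  simpa only [Function.comp_apply, algebraMap_smul] using h

end Module

theorem RingHom.Flat.isTrivialRelation_of_mem_range {A L S : Type*} [CommRing A] [CommRing L]
    [CommRing S] [Algebra L S] {φ : A →+* L} (hφ : ((algebraMap L S).comp φ).Flat)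
    {ι : Type*} [Fintype ι] {f : ι → L} {x : ι → S}
    (hf : ∀ i, f i ∈ φ.range) (h : ∑ i, f i • x i = 0) :
    Module.IsTrivialRelation f x := by
  algebraize [φ, (algebraMap L S).comp φ]
  exact Module.Flat.isTrivialRelation_of_mem_range hf h

theorem flat_over_directLimit_of_flat_over_components_general
    (ι : Type) [Preorder ι] [IsDirected ι (· ≤ ·)] [Nonempty ι]
    (R : ι → Type) [∀ i, CommRing (R i)]
    (f : ∀ i j, i ≤ j → (R i →+* R j))
    (L : Type) [CommRing L]
    (g : ∀ i, R i →+* L)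
    (hg : ∀ i j (h : i ≤ j), (g j).comp (f i j h) = g i)
    (hsurj : ∀ x : L, ∃ i, ∃ y : R i, g i y = x)
    (S : Type) [CommRing S] [Algebra L S]
    (hS : ∀ i, ((algebraMap L S).comp (g i)).Flat) :
    Module.Flat L S := by
  refine Module.Flat.of_forall_isTrivialRelation fun {l c x} hcx => ?_
  choose idx y hy using fun n => hsurj (c n)
  obtain ⟨i, hi⟩ := Finite.exists_le idx
  refine (hS i).isTrivialRelation_of_mem_range (fun n => ⟨f _ i (hi n) (y n), ?_⟩) hcx
  rw [← hy n, ← hg _ i (hi n), RingHom.comp_apply]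

/-- Let `(Rᵢ)` be a directed system of commutative rings over a directed index set with flat
transition homomorphisms, and let `R` be its direct limit (expressed via the cocone maps
`g i : Rᵢ →+* R`, which are jointly surjective and whose kernels are eventually realized in the
system).  Let `S` be a commutative `R`-algebra which is flat as an `Rᵢ`-module via the composite
`Rᵢ → R → S` for every `i`.  Then `S` is flat as an `R`-module. -/
theorem flat_over_directLimit_of_flat_over_components
    (ι : Type) [Preorder ι] [IsDirected ι (· ≤ ·)] [Nonempty ι]
    (R : ι → Type) [∀ i, CommRing (R i)]
    (f : ∀ i j, i ≤ j → (R i →+* R j))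
    (hcomp : ∀ i j k (hij : i ≤ j) (hjk : j ≤ k),
      (f j k hjk).comp (f i j hij) = f i k (le_trans hij hjk))
    (hflat : ∀ i j (h : i ≤ j), (f i j h).Flat)
    (L : Type) [CommRing L]
    (g : ∀ i, R i →+* L)
    (hg : ∀ i j (h : i ≤ j), (g j).comp (f i j h) = g i)
    (hsurj : ∀ x : L, ∃ i, ∃ y : R i, g i y = x)
    (hker : ∀ i (y : R i), g i y = 0 → ∃ j, ∃ h : i ≤ j, f i j h y = 0)
    (S : Type) [CommRing S] [Algebra L S]
    (hS : ∀ i, ((algebraMap L S).comp (g i)).Flat) :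
    Module.Flat L S :=
  flat_over_directLimit_of_flat_over_components_general ι R f L g hg hsurj S hS
end

section
/- Let V be a valuation ring and a a nonzero element of its maximal ideal such that ⋂_{n≥0} aⁿV = 0. Then the a-adic completion V̂ = lim_{n} V/aⁿV of V (AdicCompletion (Ideal.span {a}) V) is faithfully flat as a V-module; in particular, the canonical ring homomorphism V → V̂ is a faithfully flat ring map. -/
/-!
Since `⋂ aⁿV = 0` and divisibility in `V` is total, every nonzero `c ∈ V` divides some power
of `a`. As `a` is regular on `V` it is regular on `V̂`, so `V̂` is torsion-free, hence flat over
the Bézout domain `V`. Faithfulness comes from the surjection `V̂ → V/aV`: `𝔪V̂ = V̂` would force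
`𝔪 + aV = V`, impossible since `a ∈ 𝔪`.
-/

open Module

namespace AdicCompletion

variable {R M : Type*} [CommRing R] [AddCommGroup M] [Module R M]

theorem _root_.IsSMulRegular.adicCompletion {a : R} (ha : IsSMulRegular M a) :
    IsSMulRegular (AdicCompletion (Ideal.span {a}) M) a := by
  refine .of_right_eq_zero_of_smul fun x hx ↦ ext fun n ↦ ?_
  obtain ⟨y, hy⟩ := Submodule.Quotient.mk_surjective _ (x.val (n + 1))
  have hay : a • y ∈ (Ideal.span {a} ^ (n + 1) • ⊤ : Submodule R M) := by
    rw [← Submodule.Quotient.mk_eq_zero, Submodule.Quotient.mk_smul, hy, ← val_smul_apply, hx]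
    rfl
  rw [Ideal.span_singleton_pow, Submodule.ideal_span_singleton_smul,
    Submodule.mem_smul_pointwise_iff_exists] at hay
  obtain ⟨z, -, hz⟩ := hay
  have hyz : y = a ^ n • z :=
    ha (show a • y = a • (a ^ n • z) by rw [← hz, smul_smul, ← pow_succ'])
  refine (val_apply_mem_smul_top_iff _ (Nat.le_succ n)).1 ?_
  rw [← hy, hyz, Submodule.Quotient.mk_smul]
  exact Submodule.smul_mem_smul (Ideal.pow_mem_pow (Ideal.mem_span_singleton_self a) n) trivial

theorem smul_top_ne_top {I J : Ideal R} (hIJ : I ≤ J) (hJ : J • (⊤ : Submodule R M) ≠ ⊤) :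
    J • (⊤ : Submodule R (AdicCompletion I M)) ≠ ⊤ := by
  intro h
  have hquot : J • (⊤ : Submodule R (M ⧸ (I ^ 1 • ⊤ : Submodule R M))) = ⊤ := by
    simpa only [Submodule.map_smul'', Submodule.map_top, range_eval] using
      congrArg (Submodule.map (eval I M 1)) h
  have hmap : Submodule.map (I ^ 1 • ⊤ : Submodule R M).mkQ (J • ⊤) = ⊤ := by
    rwa [Submodule.map_smul'', Submodule.map_top, Submodule.range_mkQ]
  rw [Submodule.map_mkQ_eq_top,
    sup_eq_right.2 (Submodule.smul_mono_left (by simpa using hIJ))] at hmap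
  exact hJ hmap

end AdicCompletion

theorem ValuationRing.exists_dvd_pow_of_iInf_span_pow_eq_bot_s5 {R : Type*} [CommRing R]
    [IsDomain R] [ValuationRing R] {a : R}
    (hsep : ⨅ k : ℕ, Ideal.span {a ^ k} = ⊥) {c : R} (hc : c ≠ 0) : ∃ k : ℕ, c ∣ a ^ k := by
  by_contra! hndvd
  have hmem : c ∈ ⨅ k : ℕ, Ideal.span {a ^ k} := Submodule.mem_iInf _ |>.2 fun k ↦
    Ideal.mem_span_singleton.2 <| (dvd_total c (a ^ k)).resolve_left (hndvd k)
  simp [hsep, hc] at hmem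

theorem Module.IsTorsionFree.of_isSMulRegular_of_forall_dvd_pow {R M : Type*} [CommRing R]
    [Nontrivial R] [AddCommGroup M] [Module R M] {a : R} (ha : IsSMulRegular M a)
    (hdvd : ∀ c : R, c ≠ 0 → ∃ k : ℕ, c ∣ a ^ k) : IsTorsionFree R M := by
  refine .of_smul_eq_zero fun c x hcx ↦ or_iff_not_imp_left.2 fun hc ↦ ?_
  obtain ⟨k, d, hd⟩ := hdvd c hc
  exact (ha.pow k).right_eq_zero_of_smul (by rw [hd, mul_comm, mul_smul, hcx, smul_zero])

/-- Let `V` be a valuation ring and `a` a nonzero element of its maximal ideal with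
`⋂ₙ aⁿV = 0`.  Then the `a`-adic completion `V̂ = lim V/aⁿV` of `V` is faithfully flat as a
`V`-module; in particular the canonical ring homomorphism `V → V̂` (the algebra map) is
faithfully flat. -/
theorem adicCompletion_of_separated_valuation_ring_faithfully_flat
    (V : Type) [CommRing V] [IsDomain V] [ValuationRing V]
    (a : V) (ha : a ≠ 0) (hma : a ∈ IsLocalRing.maximalIdeal V)
    (hsep : (⨅ k : ℕ, (Ideal.span {a ^ k} : Ideal V)) = ⊥) :
    Module.FaithfullyFlat V (AdicCompletion (Ideal.span {a}) V) := by
  have htf : IsTorsionFree V (AdicCompletion (Ideal.span {a}) V) :=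
    .of_isSMulRegular_of_forall_dvd_pow (IsSMulRegular.of_ne_zero ha).adicCompletion
      fun _ hc ↦ ValuationRing.exists_dvd_pow_of_iInf_span_pow_eq_bot_s5 hsep hc
  have : Flat V (AdicCompletion (Ideal.span {a}) V) :=
    Flat.flat_iff_torsion_eq_bot_of_isBezout.2 (Submodule.isTorsionFree_iff_torsion_eq_bot.1 htf)
  refine ⟨fun m hm ↦ AdicCompletion.smul_top_ne_top ?_ ?_⟩
  · rw [Ideal.span_le, Set.singleton_subset_iff, IsLocalRing.eq_maximalIdeal hm]
    exact hma
  · rw [smul_eq_mul, Ideal.mul_top]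
    exact hm.ne_top
end

section
/- Let A be a commutative ring and a ∈ A an element such that: the pair (A, aA) is henselian (HenselianRing A (Ideal.span {a})); the localization A[1/a] is Noetherian; and for every finitely generated A-module the a-power-torsion submodule is finitely generated (i.e., A is a-adically adhesive and a-adically henselian). Then: (i) every finitely generated A-module M is a-adically separated, i.e., ⋂_{n≥0} aⁿM = 0; and (ii) every A-submodule N of a finitely generated A-module M is a-adically closed in M, i.e., N = ⋂_{n≥0} (N + aⁿM). -/
/-!
Let `T` be the `a`-power torsion of `M` and `D = ⋂ₙ aⁿM`. Being finitely generated, `T` is killed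
by a single power `aᶜ`, and `M ⧸ T` is `a`-torsion-free. For torsion-free `M`, division by `a` is
unique, so `D = aD`. Since `A[1/a]` is Noetherian, `D[1/a]` is generated by finitely many elements
of `D`, spanning some `N₀ ⊆ D` with `D / N₀` of `a`-power torsion; this torsion lies in that of
`M ⧸ N₀` and is therefore killed by some `aᶜ`, so `D = aᶜD ⊆ N₀` is finitely generated and
Nakayama's lemma (`a` lies in the Jacobson radical of the henselian pair) gives `D = 0`. In general,
writing `x ∈ D` as `aᶜy`, the image of `y` in the torsion-free `M ⧸ T` again lies in
`⋂ₙ aⁿ(M ⧸ T) = 0`, so `y ∈ T` and `x = 0`. Finally, `N` is closed in `M` exactly when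
`M ⧸ N` is separated.
-/

def aPowerTorsion {A : Type*} [CommRing A] (a : A) (M : Type*) [AddCommGroup M]
    [Module A M] : Submodule A M where
  carrier := {m : M | ∃ k : ℕ, a ^ k • m = 0}
  zero_mem' := ⟨0, smul_zero _⟩
  add_mem' := by
    rintro x y ⟨k, hk⟩ ⟨l, hl⟩
    refine ⟨k + l, ?_⟩
    have hx : a ^ (k + l) • x = 0 := by
      rw [add_comm, pow_add, mul_smul, hk, smul_zero]
    have hy : a ^ (k + l) • y = 0 := by
      rw [pow_add, mul_smul, hl, smul_zero]
    rw [smul_add, hx, hy, add_zero]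
  smul_mem' := by
    rintro c x ⟨k, hk⟩
    exact ⟨k, by rw [smul_comm, hk, smul_zero]⟩

open Submodule

section PowerTorsion

variable {A : Type*} [CommRing A] {a : A} {M : Type*} [AddCommGroup M] [Module A M]

lemma aPowerTorsion_eq_iSup_torsionBy :
    aPowerTorsion a M = ⨆ k : ℕ, torsionBy A M (a ^ k) :=
  le_antisymm (fun _ ⟨k, hk⟩ => mem_iSup_of_mem k hk)
    (iSup_le fun k _ hm => ⟨k, hm⟩)

lemma monotone_torsionBy_pow : Monotone fun k : ℕ => torsionBy A M (a ^ k) := by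
  intro k l hkl m (hm : a ^ k • m = 0)
  change a ^ l • m = 0
  rw [← Nat.sub_add_cancel hkl, pow_add, mul_smul, hm, smul_zero]

lemma exists_pow_smul_eq_zero_of_fg (h : (aPowerTorsion a M).FG) :
    ∃ c : ℕ, ∀ m ∈ aPowerTorsion a M, a ^ c • m = 0 := by
  have hcompact := (fg_iff_compact _).1 h
  rw [CompleteLattice.isCompactElement_iff_le_of_directed_sSup_le] at hcompact
  obtain ⟨_, ⟨c, rfl⟩, hc⟩ := hcompact _ (Set.range_nonempty _)
    (directedOn_range.2 monotone_torsionBy_pow.directed_le)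
    (aPowerTorsion_eq_iSup_torsionBy.trans sSup_range.symm).le
  exact ⟨c, fun m hm => hc hm⟩

lemma aPowerTorsion_quotient_aPowerTorsion :
    aPowerTorsion a (M ⧸ aPowerTorsion a M) = ⊥ := by
  refine eq_bot_iff.2 fun x ⟨k, hk⟩ => ?_
  obtain ⟨m, rfl⟩ := Submodule.Quotient.mk_surjective _ x
  obtain ⟨l, hl⟩ := (Quotient.mk_eq_zero _).1 ((Quotient.mk_smul _ _ _).symm.trans hk)
  exact (Quotient.mk_eq_zero _).2 ⟨l + k, by rwa [pow_add, mul_smul]⟩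

end PowerTorsion

section InfinitelyDivisible

variable {A : Type*} [CommRing A] (a : A) (M : Type*) [AddCommGroup M] [Module A M]

/-- The submodule `⋂ₙ aⁿM`. -/
def infinitelyDivisible : Submodule A M where
  carrier := {m : M | ∀ k : ℕ, ∃ y : M, m = a ^ k • y}
  zero_mem' k := ⟨0, (smul_zero _).symm⟩
  add_mem' {m m'} hm hm' k := by
    obtain ⟨y, rfl⟩ := hm k
    obtain ⟨y', rfl⟩ := hm' k
    exact ⟨y + y', (smul_add _ _ _).symm⟩
  smul_mem' c m hm k := by
    obtain ⟨y, rfl⟩ := hm k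
    exact ⟨c • y, smul_comm _ _ _⟩

variable {a M}

lemma map_mem_infinitelyDivisible {P : Type*} [AddCommGroup P] [Module A P] (g : M →ₗ[A] P)
    {m : M} (hm : m ∈ infinitelyDivisible a M) : g m ∈ infinitelyDivisible a P := fun k => by
  obtain ⟨y, rfl⟩ := hm k
  exact ⟨g y, map_smul g _ y⟩

lemma mem_infinitelyDivisible_of_pow_smul_mem (htf : aPowerTorsion a M = ⊥) {k : ℕ} {y : M}
    (hy : a ^ k • y ∈ infinitelyDivisible a M) : y ∈ infinitelyDivisible a M := fun l => by
  obtain ⟨w, hw⟩ := hy (k + l)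
  refine ⟨w, sub_eq_zero.1 ((mem_bot A).1 (htf ▸ ⟨k, ?_⟩))⟩
  rw [smul_sub, hw, pow_add, mul_smul, sub_self]

end InfinitelyDivisible

section Localization

variable {A : Type*} [CommRing A] (p : Submonoid A) {M : Type*} [AddCommGroup M] [Module A M]

lemma exists_smul_mem_of_localized_le {N N₀ : Submodule A M}
    (h : N.localized p ≤ N₀.localized p) {n : M} (hn : n ∈ N) : ∃ s ∈ p, s • n ∈ N₀ := by
  obtain ⟨m, hm, s, hms⟩ := h ⟨n, hn, 1, rfl⟩
  obtain ⟨u, hu⟩ := (IsLocalizedModule.mk'_eq_mk'_iff _ _ _ _ _).1 hms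
  refine ⟨u * s, (u * s).2, ?_⟩
  rw [one_smul] at hu
  rw [mul_smul, ← Submonoid.smul_def, ← Submonoid.smul_def, hu]
  exact N₀.smul_of_tower_mem u hm

lemma exists_fg_le_localized_le [IsNoetherianRing (Localization p)] [Module.Finite A M]
    (N : Submodule A M) : ∃ N₀ ≤ N, N₀.FG ∧ N.localized p ≤ N₀.localized p := by
  classical
  have hfg : (N.localized p).FG := IsNoetherian.noetherian _
  rw [localized, localized'_eq_span, fg_span_iff_fg_span_finset_subset] at hfg
  obtain ⟨t, hts, hspan⟩ := hfg
  obtain ⟨s, hsN, rfl⟩ := Finset.subset_set_image_iff.1 hts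
  refine ⟨span A s, span_le.2 hsN, fg_span s.finite_toSet, ?_⟩
  rw [localized, localized, localized'_eq_span, hspan, localized'_span, Finset.coe_image]

end Localization

section Separatedness

universe v

variable {A : Type*} [CommRing A] {a : A}

lemma infinitelyDivisible_fg_of_aPowerTorsion_eq_bot [IsNoetherianRing (Localization.Away a)]
    (htor : ∀ (Q : Type v) [AddCommGroup Q] [Module A Q] [Module.Finite A Q],
      (aPowerTorsion a Q).FG)
    {M : Type v} [AddCommGroup M] [Module A M] [Module.Finite A M]
    (htf : aPowerTorsion a M = ⊥) : (infinitelyDivisible a M).FG := by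
  obtain ⟨N₀, hN₀, hfg, hloc⟩ := exists_fg_le_localized_le (Submonoid.powers a)
    (infinitelyDivisible a M)
  obtain ⟨c, hc⟩ := exists_pow_smul_eq_zero_of_fg (htor (M ⧸ N₀))
  suffices infinitelyDivisible a M ≤ N₀ from le_antisymm this hN₀ ▸ hfg
  intro n hn
  obtain ⟨y, rfl⟩ := hn c
  have hy := mem_infinitelyDivisible_of_pow_smul_mem htf hn
  obtain ⟨_, ⟨s, rfl⟩, hs⟩ := exists_smul_mem_of_localized_le _ hloc hy
  have hy_tors : N₀.mkQ y ∈ aPowerTorsion a (M ⧸ N₀) :=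
    ⟨s, by rwa [← map_smul, mkQ_apply, Quotient.mk_eq_zero]⟩
  have := hc _ hy_tors
  rwa [← map_smul, mkQ_apply, Quotient.mk_eq_zero] at this

lemma infinitelyDivisible_eq_bot_of_aPowerTorsion_eq_bot
    [IsNoetherianRing (Localization.Away a)] (hjac : Ideal.span {a} ≤ Ideal.jacobson ⊥)
    (htor : ∀ (Q : Type v) [AddCommGroup Q] [Module A Q] [Module.Finite A Q],
      (aPowerTorsion a Q).FG)
    {M : Type v} [AddCommGroup M] [Module A M] [Module.Finite A M]
    (htf : aPowerTorsion a M = ⊥) : infinitelyDivisible a M = ⊥ := by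
  refine eq_bot_of_le_smul_of_le_jacobson_bot _ _
    (infinitelyDivisible_fg_of_aPowerTorsion_eq_bot htor htf) (fun n hn => ?_) hjac
  obtain ⟨y, rfl⟩ := hn 1
  exact smul_mem_smul (Ideal.mem_span_singleton.2 (by rw [pow_one]))
    (mem_infinitelyDivisible_of_pow_smul_mem htf hn)

lemma infinitelyDivisible_eq_bot
    [IsNoetherianRing (Localization.Away a)] (hjac : Ideal.span {a} ≤ Ideal.jacobson ⊥)
    (htor : ∀ (Q : Type v) [AddCommGroup Q] [Module A Q] [Module.Finite A Q],
      (aPowerTorsion a Q).FG)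
    {M : Type v} [AddCommGroup M] [Module A M] [Module.Finite A M] :
    infinitelyDivisible a M = ⊥ := by
  set T := aPowerTorsion a M
  have hquot : infinitelyDivisible a (M ⧸ T) = ⊥ :=
    infinitelyDivisible_eq_bot_of_aPowerTorsion_eq_bot hjac htor
      aPowerTorsion_quotient_aPowerTorsion
  obtain ⟨c, hc⟩ := exists_pow_smul_eq_zero_of_fg (htor M)
  refine eq_bot_iff.2 fun x hx => ?_
  obtain ⟨y, rfl⟩ := hx c
  have hy : T.mkQ y ∈ infinitelyDivisible a (M ⧸ T) := by
    refine mem_infinitelyDivisible_of_pow_smul_mem aPowerTorsion_quotient_aPowerTorsion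
      (k := c) ?_
    rw [← map_smul]
    exact map_mem_infinitelyDivisible _ hx
  rw [hquot, mem_bot, mkQ_apply, Quotient.mk_eq_zero] at hy
  exact hc y hy

end Separatedness

lemma mem_of_forall_mem_add_pow_smul {A : Type*} [CommRing A] {a : A}
    {M : Type*} [AddCommGroup M] [Module A M] {N : Submodule A M}
    (hsep : infinitelyDivisible a (M ⧸ N) = ⊥) {x : M}
    (hx : ∀ k : ℕ, ∃ z ∈ N, ∃ y : M, x = z + a ^ k • y) : x ∈ N := by
  rw [← Quotient.mk_eq_zero, ← mem_bot A, ← hsep]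
  intro k
  obtain ⟨z, hz, y, rfl⟩ := hx k
  refine ⟨N.mkQ y, ?_⟩
  rw [← map_smul, mkQ_apply, Quotient.mk_add, (Quotient.mk_eq_zero N).2 hz, zero_add]

/-- Let `A` be a commutative ring and `a ∈ A` such that `(A, aA)` is a henselian pair, `A[1/a]`
is Noetherian, and the `a`-power-torsion of every finitely generated `A`-module is finitely
generated (i.e. `A` is `a`-adically adhesive and `a`-adically henselian).  Then (i) every
finitely generated `A`-module `M` is `a`-adically separated (`⋂ₙ aⁿM = 0`), and (ii) every
submodule `N` of a finitely generated `A`-module `M` is `a`-adically closed in `M`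
(`N = ⋂ₙ (N + aⁿM)`). -/
theorem adhesive_henselian_separatedness_and_closedness
    (A : Type) [CommRing A] (a : A)
    (hhens : HenselianRing A (Ideal.span {a}))
    (hnoeth : IsNoetherianRing (Localization.Away a))
    (htor : ∀ (M : Type) [AddCommGroup M] [Module A M] [Module.Finite A M],
      (aPowerTorsion a M).FG) :
    (∀ (M : Type) [AddCommGroup M] [Module A M] [Module.Finite A M] (x : M),
      (∀ k : ℕ, ∃ y : M, x = a ^ k • y) → x = 0) ∧
    (∀ (M : Type) [AddCommGroup M] [Module A M] [Module.Finite A M]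
      (N : Submodule A M) (x : M),
      (∀ k : ℕ, ∃ z ∈ N, ∃ y : M, x = z + a ^ k • y) → x ∈ N) := by
  have hsep (M : Type) [AddCommGroup M] [Module A M] [Module.Finite A M] :
      infinitelyDivisible a M = ⊥ :=
    infinitelyDivisible_eq_bot hhens.jac htor
  exact ⟨fun M _ _ _ x hx => (mem_bot A).1 (hsep M ▸ hx),
    fun M _ _ _ N _ => mem_of_forall_mem_add_pow_smul (hsep (M ⧸ N))⟩
end
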